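/- The set of odd roots α of pe(n) with (ζ_x, α) > 0, for x = (μ, ν) ∈ BRP^{00}_n with p = ℓ(μ) and n − p = ℓ(ν), equals the disjoint union over 1 ≤ i ≤ p of {ε_i + ε_j : i ≤ j ≤ μ_i + i − 1} together with the disjoint union over 1 ≤ k ≤ n − p of {−ε_{n+1−l} − ε_{n+1−k} : k < l ≤ ν_k + k − 1}. -/

import Mathlib

/-!
Because the parts of `μ` and `ν` together are `1, …, n`, exactly `n - μ_i` parts exceed `μ_i`, and
`i - 1` of them are parts of `μ`; so `ν_k > μ_i` iff `k ≤ n + 1 - μ_i - i`. This decides the sign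
of `(ζ_x, ε_i + ε_j) = ζ_i + ζ_j` when `i ≤ p < j`; the other cases are immediate because `μ`
decreases strictly. The negative roots reduce to the positive ones by exchanging `μ` and `ν`,
which replaces `ζ_x` by `k ↦ -ζ_x (n + 1 - k)`.
-/


/-- The basis vector `ε_i` (1-indexed) of the weight lattice, as a function `ℕ → ℤ`. -/
def eps (i : ℕ) : ℕ → ℤ := fun k => if k = i then 1 else 0

/-- The odd roots of `pe(n)`:
`{ε_i + ε_j : 1 ≤ i ≤ j ≤ n} ∪ {-ε_i - ε_j : 1 ≤ i < j ≤ n}`. -/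
def OddRoots (n : ℕ) : Set (ℕ → ℤ) :=
  {α | ∃ i j, 1 ≤ i ∧ i ≤ j ∧ j ≤ n ∧ α = eps i + eps j} ∪
  {α | ∃ i j, 1 ≤ i ∧ i < j ∧ j ≤ n ∧ α = -eps i - eps j}

/-- The standard bilinear form `(ζ, α) = Σ_{k=1}^n ζ_k α_k`. -/
def pairing (n : ℕ) (ζ α : ℕ → ℤ) : ℤ := ∑ k ∈ Finset.Icc 1 n, ζ k * α k

/-- The weight `ζ_x = Σ_i μ_i ε_i − Σ_j ν_j ε_{n+1−j}` attached to a bipartition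
`x = (μ, ν)` with `ℓ(μ) = p` (partitions given as 1-indexed sequences of parts). -/
def zetaWt (n p : ℕ) (μ ν : ℕ → ℕ) : ℕ → ℤ :=
  fun k => if k ≤ p then (μ k : ℤ) else -(ν (n + 1 - k) : ℤ)

open Finset

section Pairing

variable {n : ℕ} {ζ : ℕ → ℤ}

theorem pairing_add (α β : ℕ → ℤ) : pairing n ζ (α + β) = pairing n ζ α + pairing n ζ β := by
  simp only [pairing, Pi.add_apply, mul_add, sum_add_distrib]

theorem pairing_neg (α : ℕ → ℤ) : pairing n ζ (-α) = -pairing n ζ α := by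
  simp only [pairing, Pi.neg_apply, mul_neg, sum_neg_distrib]

theorem pairing_eps {i : ℕ} (hi : 1 ≤ i) (hin : i ≤ n) : pairing n ζ (eps i) = ζ i := by
  simp [pairing, eps, hi, hin]

theorem pairing_eps_add_eps {i j : ℕ} (hi : 1 ≤ i) (hin : i ≤ n) (hj : 1 ≤ j) (hjn : j ≤ n) :
    pairing n ζ (eps i + eps j) = ζ i + ζ j := by
  rw [pairing_add, pairing_eps hi hin, pairing_eps hj hjn]

theorem pairing_neg_eps_sub_eps {i j : ℕ} (hi : 1 ≤ i) (hin : i ≤ n) (hj : 1 ≤ j)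
    (hjn : j ≤ n) : pairing n ζ (-eps i - eps j) = -(ζ i + ζ j) := by
  rw [sub_eq_add_neg, pairing_add, pairing_neg, pairing_neg, pairing_eps hi hin,
    pairing_eps hj hjn, neg_add]

end Pairing

theorem zetaWt_swap {n p q m : ℕ} (hpq : p + q = n) (μ ν : ℕ → ℕ) (hm : 1 ≤ m) (hmn : m ≤ n) :
    zetaWt n q ν μ (n + 1 - m) = -zetaWt n p μ ν m := by
  unfold zetaWt
  split_ifs
  all_goals first | omega | simp [show n + 1 - (n + 1 - m) = m by omega]

section Sequences

variable {f : ℕ → ℕ}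

theorem StrictAntiOn.apply_add_sub_le {a b i j : ℕ} (hf : StrictAntiOn f (Set.Icc a b))
    (hai : a ≤ i) (hij : i ≤ j) (hjb : j ≤ b) : f j + (j - i) ≤ f i := by
  induction j, hij using Nat.le_induction with
  | base => simp
  | succ j hij ih =>
    have hlt : f (j + 1) < f j := hf ⟨by omega, by omega⟩ ⟨by omega, hjb⟩ (by omega)
    have := ih (by omega)
    omega

theorem StrictAntiOn.card_filter_lt_apply {p i : ℕ} (hf : StrictAntiOn f (Set.Icc 1 p))
    (hi : 1 ≤ i) (hip : i ≤ p) : #{x ∈ Icc 1 p | f i < f x} = i - 1 := by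
  have : {x ∈ Icc 1 p | f i < f x} = Icc 1 (i - 1) := by
    ext x
    simp only [mem_filter, mem_Icc]
    constructor
    · rintro ⟨hx, hlt⟩
      have := (hf.lt_iff_gt ⟨hi, hip⟩ hx).1 hlt
      omega
    · rintro ⟨hx, hxi⟩
      exact ⟨⟨hx, by omega⟩, hf ⟨hx, by omega⟩ ⟨hi, hip⟩ (by omega)⟩
  rw [this, Nat.card_Icc, Nat.add_sub_cancel]

theorem AntitoneOn.lt_apply_iff_le_card_filter {q k : ℕ} (hf : AntitoneOn f (Set.Icc 1 q))
    (hk : 1 ≤ k) (hkq : k ≤ q) (v : ℕ) : v < f k ↔ k ≤ #{j ∈ Icc 1 q | v < f j} := by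
  constructor
  · intro hlt
    have : Icc 1 k ⊆ {j ∈ Icc 1 q | v < f j} := fun j hj => by
      simp only [mem_filter, mem_Icc] at hj ⊢
      exact ⟨⟨hj.1, by omega⟩, hlt.trans_le (hf ⟨hj.1, by omega⟩ ⟨hk, hkq⟩ hj.2)⟩
    simpa using card_le_card this
  · intro hle
    by_contra! hge
    have : {j ∈ Icc 1 q | v < f j} ⊆ Icc 1 (k - 1) := fun j hj => by
      simp only [mem_filter, mem_Icc] at hj ⊢
      by_contra! hkj
      have := hf ⟨hk, hkq⟩ hj.1 (show k ≤ j by omega)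
      omega
    have := card_le_card this
    simp only [Nat.card_Icc] at this
    omega

end Sequences

/-- `μ ∗ ν = (n, n - 1, …, 1)`, for partitions `μ` and `ν` with `p` and `q` parts. -/
def IsStaircaseSplit (n p q : ℕ) (μ ν : ℕ → ℕ) : Prop :=
  (Icc 1 p).val.map μ + (Icc 1 q).val.map ν = (Icc 1 n).val

namespace IsStaircaseSplit

variable {n p q : ℕ} {μ ν : ℕ → ℕ}

theorem symm (h : IsStaircaseSplit n p q μ ν) : IsStaircaseSplit n q p ν μ := by
  rw [IsStaircaseSplit, add_comm]
  exact h

theorem add_eq (h : IsStaircaseSplit n p q μ ν) : p + q = n := by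
  simpa using congrArg Multiset.card h

theorem apply_mem_Icc (h : IsStaircaseSplit n p q μ ν) {i : ℕ} (hi : 1 ≤ i) (hip : i ≤ p) :
    μ i ∈ Icc 1 n :=
  show μ i ∈ (Icc 1 n).val from
    h ▸ Multiset.mem_add.2 (.inl (Multiset.mem_map_of_mem μ (mem_Icc.2 ⟨hi, hip⟩)))

theorem nodup (h : IsStaircaseSplit n p q μ ν) :
    ((Icc 1 p).val.map μ).Nodup ∧ ((Icc 1 q).val.map ν).Nodup ∧
      Disjoint ((Icc 1 p).val.map μ) ((Icc 1 q).val.map ν) :=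
  Multiset.nodup_add.1 (h ▸ (Icc 1 n).nodup)

theorem ne (h : IsStaircaseSplit n p q μ ν) {i k : ℕ} (hi : 1 ≤ i) (hip : i ≤ p) (hk : 1 ≤ k)
    (hkq : k ≤ q) : μ i ≠ ν k := fun heq =>
  Multiset.disjoint_left.1 h.nodup.2.2
    (Multiset.mem_map_of_mem μ (mem_Icc.2 ⟨hi, hip⟩))
    (heq ▸ Multiset.mem_map_of_mem ν (mem_Icc.2 ⟨hk, hkq⟩))

theorem strictAntiOn (h : IsStaircaseSplit n p q μ ν) (hμ : AntitoneOn μ (Set.Ici 1)) :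
    StrictAntiOn μ (Set.Icc 1 p) :=
  (hμ.mono Set.Icc_subset_Ici_self).strictAntiOn_of_injOn fun _ hi _ hj =>
    Multiset.inj_on_of_nodup_map h.nodup.1 _ (by simpa using hi) _ (by simpa using hj)

theorem card_filter_lt_add_card_filter_lt (h : IsStaircaseSplit n p q μ ν) (v : ℕ) :
    #{i ∈ Icc 1 p | v < μ i} + #{k ∈ Icc 1 q | v < ν k} = n - v := by
  have := congrArg (Multiset.countP (v < ·)) h
  rw [Multiset.countP_add, Multiset.countP_map, Multiset.countP_map] at this
  have hIcc : {x ∈ Icc 1 n | v < x} = Icc (v + 1) n := by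
    ext x
    simp only [mem_filter, Finset.mem_Icc]
    omega
  rw [card_def, card_def, filter_val, filter_val, this, Multiset.countP_eq_card_filter,
    ← filter_val, ← card_def, hIcc, Nat.card_Icc, Nat.add_sub_add_right]

theorem apply_lt_apply_iff (h : IsStaircaseSplit n p q μ ν) (hμ : AntitoneOn μ (Set.Ici 1))
    (hν : AntitoneOn ν (Set.Ici 1)) {i k : ℕ} (hi : 1 ≤ i) (hip : i ≤ p) (hk : 1 ≤ k)
    (hkq : k ≤ q) : ν k < μ i ↔ n + 2 ≤ μ i + i + k := by
  have hcount := h.card_filter_lt_add_card_filter_lt (μ i)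
  rw [(h.strictAntiOn hμ).card_filter_lt_apply hi hip] at hcount
  have hνk := (hν.mono Set.Icc_subset_Ici_self).lt_apply_iff_le_card_filter hk hkq (μ i)
  have hne := h.ne hi hip hk hkq
  have hμi := mem_Icc.1 (h.apply_mem_Icc hi hip)
  omega

theorem apply_add_le (h : IsStaircaseSplit n p q μ ν) (hμ : AntitoneOn μ (Set.Ici 1)) {i : ℕ}
    (hi : 1 ≤ i) (hip : i ≤ p) : μ i + i ≤ n + 1 := by
  have hcount := h.card_filter_lt_add_card_filter_lt (μ i)
  rw [(h.strictAntiOn hμ).card_filter_lt_apply hi hip] at hcount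
  have hμi := mem_Icc.1 (h.apply_mem_Icc hi hip)
  omega

theorem zetaWt_add_pos_iff (h : IsStaircaseSplit n p q μ ν) (hμ : AntitoneOn μ (Set.Ici 1))
    (hν : AntitoneOn ν (Set.Ici 1)) {i j : ℕ} (hi : 1 ≤ i) (hij : i ≤ j) (hjn : j ≤ n) :
    0 < zetaWt n p μ ν i + zetaWt n p μ ν j ↔ i ≤ p ∧ j + 1 ≤ μ i + i := by
  have hpq := h.add_eq
  by_cases hip : i ≤ p
  · have hμi := mem_Icc.1 (h.apply_mem_Icc hi hip)
    by_cases hjp : j ≤ p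
    · have hμj := mem_Icc.1 (h.apply_mem_Icc (hi.trans hij) hjp)
      have hgap := (h.strictAntiOn hμ).apply_add_sub_le hi hij hjp
      simp only [zetaWt, hip, hjp, if_true, true_and]
      omega
    · have hνμ := h.apply_lt_apply_iff hμ hν hi hip (k := n + 1 - j) (by omega) (by omega)
      simp only [zetaWt, hip, hjp, if_true, if_false, true_and]
      omega
  · have hνi := mem_Icc.1 (h.symm.apply_mem_Icc (i := n + 1 - i) (by omega) (by omega))
    have hνj := mem_Icc.1 (h.symm.apply_mem_Icc (i := n + 1 - j) (by omega) (by omega))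
    simp only [zetaWt, hip, show ¬j ≤ p by omega, if_false, false_and, iff_false, not_lt]
    omega

theorem eps_add_eps_pairing_pos_iff (h : IsStaircaseSplit n p q μ ν)
    (hμ : AntitoneOn μ (Set.Ici 1)) (hν : AntitoneOn ν (Set.Ici 1)) (α : ℕ → ℤ) :
    (∃ i j, 1 ≤ i ∧ i ≤ j ∧ j ≤ n ∧ α = eps i + eps j) ∧ 0 < pairing n (zetaWt n p μ ν) α ↔
      ∃ i j, 1 ≤ i ∧ i ≤ p ∧ i ≤ j ∧ j + 1 ≤ μ i + i ∧ α = eps i + eps j := by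
  constructor
  · rintro ⟨⟨i, j, hi, hij, hjn, rfl⟩, hpos⟩
    rw [pairing_eps_add_eps hi (hij.trans hjn) (hi.trans hij) hjn,
      h.zetaWt_add_pos_iff hμ hν hi hij hjn] at hpos
    exact ⟨i, j, hi, hpos.1, hij, hpos.2, rfl⟩
  · rintro ⟨i, j, hi, hip, hij, hj, rfl⟩
    have hjn : j ≤ n := by have := h.apply_add_le hμ hi hip; omega
    refine ⟨⟨i, j, hi, hij, hjn, rfl⟩, ?_⟩
    rw [pairing_eps_add_eps hi (hij.trans hjn) (hi.trans hij) hjn,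
      h.zetaWt_add_pos_iff hμ hν hi hij hjn]
    exact ⟨hip, hj⟩

theorem neg_eps_sub_eps_pairing_pos_iff (h : IsStaircaseSplit n p q μ ν)
    (hμ : AntitoneOn μ (Set.Ici 1)) (hν : AntitoneOn ν (Set.Ici 1)) (α : ℕ → ℤ) :
    (∃ i j, 1 ≤ i ∧ i < j ∧ j ≤ n ∧ α = -eps i - eps j) ∧ 0 < pairing n (zetaWt n p μ ν) α ↔
      ∃ k l, 1 ≤ k ∧ k ≤ q ∧ k < l ∧ l + 1 ≤ ν k + k ∧
        α = -eps (n + 1 - l) - eps (n + 1 - k) := by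
  have hpq := h.add_eq
  constructor
  · rintro ⟨⟨i, j, hi, hij, hjn, rfl⟩, hpos⟩
    rw [pairing_neg_eps_sub_eps hi (by omega) (by omega) hjn, neg_add,
      ← zetaWt_swap hpq μ ν hi (by omega), ← zetaWt_swap hpq μ ν (by omega) hjn, add_comm] at hpos
    obtain ⟨hkq, hl⟩ := (h.symm.zetaWt_add_pos_iff hν hμ (by omega) (by omega) (by omega)).1 hpos
    refine ⟨n + 1 - j, n + 1 - i, by omega, hkq, by omega, hl, ?_⟩
    rw [Nat.sub_sub_self (by omega), Nat.sub_sub_self (by omega)]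
  · rintro ⟨k, l, hk, hkq, hkl, hl, rfl⟩
    have hln : l ≤ n := by have := h.symm.apply_add_le hν hk hkq; omega
    refine ⟨⟨n + 1 - l, n + 1 - k, by omega, by omega, by omega, rfl⟩, ?_⟩
    rw [pairing_neg_eps_sub_eps (by omega) (by omega) (by omega) (by omega), neg_add,
      ← zetaWt_swap hpq μ ν (by omega) (by omega), ← zetaWt_swap hpq μ ν (by omega) (by omega),
      Nat.sub_sub_self (by omega), Nat.sub_sub_self (by omega), add_comm]
    exact (h.symm.zetaWt_add_pos_iff hν hμ hk hkl.le hln).2 ⟨hkq, hl⟩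

end IsStaircaseSplit

theorem stmt10_general (n p q : ℕ) (μ ν : ℕ → ℕ)
    (hμdec : ∀ i, 1 ≤ i → μ (i + 1) ≤ μ i)
    (hνdec : ∀ j, 1 ≤ j → ν (j + 1) ≤ ν j)
    (hstair : ((Finset.Icc 1 p).val.map μ) + ((Finset.Icc 1 q).val.map ν)
      = (Finset.Icc 1 n).val) :
    {α | α ∈ OddRoots n ∧ 0 < pairing n (zetaWt n p μ ν) α} =
      {α | ∃ i j, 1 ≤ i ∧ i ≤ p ∧ i ≤ j ∧ j + 1 ≤ μ i + i ∧ α = eps i + eps j} ∪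
      {α | ∃ k l, 1 ≤ k ∧ k ≤ q ∧ k < l ∧ l + 1 ≤ ν k + k ∧
        α = -eps (n + 1 - l) - eps (n + 1 - k)} := by
  have hμ : AntitoneOn μ (Set.Ici 1) :=
    antitoneOn_of_add_one_le Set.ordConnected_Ici fun i _ hi _ => hμdec i hi
  have hν : AntitoneOn ν (Set.Ici 1) :=
    antitoneOn_of_add_one_le Set.ordConnected_Ici fun j _ hj _ => hνdec j hj
  have h : IsStaircaseSplit n p q μ ν := hstair
  ext α
  simp only [OddRoots, Set.mem_union, Set.mem_ofPred_eq, or_and_right]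
  rw [h.eps_add_eps_pairing_pos_iff hμ hν, h.neg_eps_sub_eps_pairing_pos_iff hμ hν]

/-- For `x = (μ, ν) ∈ BRP⁰⁰ₙ` with `p = ℓ(μ)` and `q = n − p = ℓ(ν)`, the set of odd
roots `α` of `pe(n)` with `(ζ_x, α) > 0` equals the union over `1 ≤ i ≤ p` of
`{ε_i + ε_j : i ≤ j ≤ μ_i + i − 1}` with the union over `1 ≤ k ≤ n − p` of
`{−ε_{n+1−l} − ε_{n+1−k} : k < l ≤ ν_k + k − 1}`. -/
theorem stmt10 (n p q : ℕ) (hpq : p + q = n) (μ ν : ℕ → ℕ)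
    (hμpos : ∀ i, 1 ≤ i → i ≤ p → 0 < μ i) (hμ0 : ∀ i, p < i → μ i = 0)
    (hμdec : ∀ i, 1 ≤ i → μ (i + 1) ≤ μ i)
    (hνpos : ∀ j, 1 ≤ j → j ≤ q → 0 < ν j) (hν0 : ∀ j, q < j → ν j = 0)
    (hνdec : ∀ j, 1 ≤ j → ν (j + 1) ≤ ν j)
    (hstair : ((Finset.Icc 1 p).val.map μ) + ((Finset.Icc 1 q).val.map ν)
      = (Finset.Icc 1 n).val) :
    {α | α ∈ OddRoots n ∧ 0 < pairing n (zetaWt n p μ ν) α} =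
      {α | ∃ i j, 1 ≤ i ∧ i ≤ p ∧ i ≤ j ∧ j + 1 ≤ μ i + i ∧ α = eps i + eps j} ∪
      {α | ∃ k l, 1 ≤ k ∧ k ≤ q ∧ k < l ∧ l + 1 ≤ ν k + k ∧
        α = -eps (n + 1 - l) - eps (n + 1 - k)} :=
  stmt10_general n p q μ ν hμdec hνdec hstair
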